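/- Every rate vector in the convex hull of indicator vectors of independent sets of the conflict graph (L, I) is achievable by collision-free framed schedules: for any such R and ε > 0, there is a collision-free framed schedule S of some frame length T_F ≥ 2D* + 1 (binary collision case) with R_S ≥ R − ε componentwise. -/

import Mathlib

open scoped Classical

open Filter

/-- Collision freeness for a binary collision profile. -/
def CollisionFreeB {L : Type*} (I : L → Set L) (D : L → L → ℤ)
    (S : L → ℤ → Bool) : Prop :=
  ∀ l t, S l t = true → ∀ l' ∈ I l, S l' (t + D l l') = false

/-- A framed schedule of frame length `TF` with guard interval `Dstar`. -/
def Framed {L : Type*} (Dstar TF : ℕ) (S : L → ℤ → Bool) : Prop :=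
  (∀ l (t : ℤ), t < 0 → S l t = false) ∧
  (∀ l (k i : ℕ), TF - Dstar ≤ i → i < TF → S l ((k : ℤ) * TF + i) = false) ∧
  (∀ l (k i j : ℕ), i < TF - Dstar → j < TF - Dstar →
    S l ((k : ℤ) * TF + i) = S l ((k : ℤ) * TF + j))

/-- Independent set of the conflict graph `(L, I)`. -/
def IndepB {L : Type*} (I : L → Set L) (A : Set L) : Prop :=
  ∀ l ∈ A, ∀ l' ∈ I l, l' ∉ A

/-- Indicator vector of a subset of links. -/
noncomputable def indVec {L : Type*} (A : Set L) : L → ℝ :=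
  fun l => if l ∈ A then 1 else 0

/-- Average over `t = 0, …, T−1` of the indicator of collision-free activity. -/
noncomputable def rateAvgB {L : Type*} (I : L → Set L) (D : L → L → ℤ)
    (S : L → ℤ → Bool) (l : L) (T : ℕ) : ℝ :=
  (∑ t ∈ Finset.range T,
      if S l (t : ℤ) = true ∧ ∀ l' ∈ I l, S l' ((t : ℤ) + D l l') = false
      then (1 : ℝ) else 0) / T

/-!
Write `R = ∑ᵢ wᵢ • indVec Aᵢ` with independent sets `Aᵢ`. Take frames of length `M` in a pattern
of `M` frames repeated periodically, in which `Aᵢ` is the active set of `⌊wᵢ M⌋` frames and the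
remaining frames are idle. Every shift `D l l'` is bounded by the guard interval `Dstar`, so a slot
in the active part of a frame only interacts with the same frame, and independence of the active
sets gives collision freedom. Link `l` then has rate `(1 - Dstar / M) · (∑ᵢ ⌊wᵢ M⌋ 𝟙[l ∈ Aᵢ]) / M`,
which is at least `R l - (Dstar + #terms) / M`.
-/

open Finset

lemma Function.Periodic.sum_range_mul_add {g : ℕ → ℝ} {P : ℕ} (hg : Function.Periodic g P)
    (q r : ℕ) :
    ∑ u ∈ range (q * P + r), g u = q * ∑ u ∈ range P, g u + ∑ u ∈ range r, g u := by
  have hshift : ∀ q x : ℕ, g (q * P + x) = g x := fun q x => by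
    rw [add_comm]; exact hg.nat_mul q x
  have hblocks : ∀ q : ℕ, ∑ u ∈ range (q * P), g u = q * ∑ u ∈ range P, g u := by
    intro q
    induction q with
    | zero => simp
    | succ q ih =>
      rw [Nat.succ_mul, sum_range_add, ih]
      simp only [hshift]
      push_cast
      ring
  rw [sum_range_add, hblocks]
  simp only [hshift]

lemma Function.Periodic.tendsto_sum_range_div {g : ℕ → ℝ} {P : ℕ} (hg : Function.Periodic g P)
    (hP : 0 < P) :
    Tendsto (fun T : ℕ => (∑ u ∈ range T, g u) / T) atTop
      (nhds ((∑ u ∈ range P, g u) / P)) := by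
  set c := (∑ u ∈ range P, g u) / P
  have hPc : (P : ℝ) * c = ∑ u ∈ range P, g u := mul_div_cancel₀ _ (by positivity)
  clear_value c
  -- the deviation `h` from the linear growth `T * c` is itself `P`-periodic, hence bounded
  set h : ℕ → ℝ := fun T => ∑ u ∈ range T, g u - T * c
  have hh : ∀ T, h T = h (T % P) := by
    intro T
    conv_lhs => rw [← Nat.mod_add_div T P, add_comm, mul_comm]
    simp only [h, hg.sum_range_mul_add]
    push_cast
    linear_combination -((T / P : ℕ) : ℝ) * hPc
  set C := ∑ r ∈ range P, |h r|
  have hbound : ∀ T, |h T| ≤ C := fun T => hh T ▸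
    single_le_sum (f := fun r => |h r|) (fun _ _ => abs_nonneg _) (mem_range.2 (Nat.mod_lt T hP))
  have hdev : Tendsto (fun T : ℕ => h T / T) atTop (nhds 0) := by
    refine squeeze_zero_norm' ?_ (tendsto_const_div_atTop_nhds_zero_nat C)
    filter_upwards with T
    rw [norm_div, Real.norm_natCast, Real.norm_eq_abs]
    gcongr
    exact hbound T
  have hlim := hdev.add_const c
  rw [zero_add] at hlim
  refine hlim.congr' ?_
  filter_upwards [eventually_ne_atTop 0] with T hT
  simp only [h]
  field_simp
  ring

lemma Int.ediv_eq_ediv_of_emod_add_lt {T G a b : ℤ} (hT : 0 < T) (ha : a % T + G < T)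
    (hb : b % T + G < T) (hab : |b - a| ≤ G) : b / T = a / T := by
  have ha' := Int.mul_ediv_add_emod a T
  have hb' := Int.mul_ediv_add_emod b T
  have ha0 := Int.emod_nonneg a hT.ne'
  have hb0 := Int.emod_nonneg b hT.ne'
  obtain ⟨hab₁, hab₂⟩ := abs_le.mp hab
  rcases lt_trichotomy (b / T) (a / T) with h | h | h
  · nlinarith
  · exact h
  · nlinarith

lemma rateAvgB_eq_of_collisionFreeB {L : Type*} {I : L → Set L} {D : L → L → ℤ}
    {S : L → ℤ → Bool} (hS : CollisionFreeB I D S) (l : L) :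
    rateAvgB I D S l = fun T => (∑ t ∈ range T, if S l t then (1 : ℝ) else 0) / T := by
  funext T
  unfold rateAvgB
  congr 1
  exact sum_congr rfl fun t _ => if_congr ⟨And.left, fun h => ⟨h, hS l t h⟩⟩ rfl rfl

lemma card_filter_add_lt (a b : ℕ) : #{v ∈ range a | v + b < a} = a - b := by
  rw [show {v ∈ range a | v + b < a} = range (a - b) by ext; simp; omega, card_range]

section FrameSchedule

variable {L : Type*}

/-- Frame `k` is the block of slots `[k * TF, (k + 1) * TF)`; the links of `B k` are active in
its first `TF - Dstar` slots (the guard is written as `τ % TF + Dstar < TF` to avoid truncated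
subtraction). -/
noncomputable def frameSchedule (Dstar TF : ℕ) (B : ℕ → Set L) : L → ℤ → Bool :=
  fun l τ => decide (0 ≤ τ ∧ τ % TF + Dstar < TF ∧ l ∈ B (τ / TF).toNat)

variable {Dstar TF N : ℕ} {B : ℕ → Set L}

lemma frameSchedule_natCast (l : L) (u : ℕ) :
    frameSchedule Dstar TF B l u = decide (u % TF + Dstar < TF ∧ l ∈ B (u / TF)) := by
  simp only [frameSchedule, ← Int.natCast_emod, ← Int.natCast_ediv, Int.toNat_natCast]
  norm_cast
  simp

lemma frameSchedule_mul_add (l : L) (k i : ℕ) (hi : i < TF) :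
    frameSchedule Dstar TF B l (k * TF + i) = decide (i + Dstar < TF ∧ l ∈ B k) := by
  have hTF : 0 < TF := by omega
  rw [← Nat.cast_mul, ← Nat.cast_add, frameSchedule_natCast, add_comm (k * TF),
    Nat.add_mul_mod_self_right, Nat.mod_eq_of_lt hi, Nat.add_mul_div_right _ _ hTF,
    Nat.div_eq_of_lt hi, zero_add]

lemma framed_frameSchedule : Framed Dstar TF (frameSchedule Dstar TF B) := by
  refine ⟨fun l τ hτ => ?_, fun l k i hi hiTF => ?_, fun l k i j hi hj => ?_⟩
  · simp [frameSchedule, hτ.not_ge]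
  · rw [frameSchedule_mul_add l k i hiTF]
    simp only [decide_eq_false_iff_not, not_and]
    omega
  · rw [frameSchedule_mul_add l k i (by omega), frameSchedule_mul_add l k j (by omega)]
    simp [show i + Dstar < TF by omega, show j + Dstar < TF by omega]

lemma collisionFreeB_frameSchedule (I : L → Set L) (D : L → L → ℤ)
    (hD : ∀ l, ∀ l' ∈ I l, |D l l'| ≤ (Dstar : ℤ)) (hB : ∀ k, IndepB I (B k)) (hTF : 0 < TF) :
    CollisionFreeB I D (frameSchedule Dstar TF B) := by
  intro l τ hl l' hl'
  rw [Bool.eq_false_iff]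
  intro hl''
  simp only [frameSchedule, decide_eq_true_eq] at hl hl''
  obtain ⟨-, hτ, hmem⟩ := hl
  obtain ⟨-, hτ', hmem'⟩ := hl''
  have hframe : (τ + D l l') / TF = τ / TF :=
    Int.ediv_eq_ediv_of_emod_add_lt (by exact_mod_cast hTF) hτ hτ' (by simpa using hD l l' hl')
  rw [hframe] at hmem'
  exact hB _ l hmem l' hl' hmem'

lemma sum_range_frameSchedule (l : L) :
    ∑ u ∈ range (N * TF), (if frameSchedule Dstar TF B l u then (1 : ℝ) else 0) =
      (TF - Dstar : ℕ) * ∑ k ∈ range N, indVec (B k) l := by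
  induction N with
  | zero => simp
  | succ N ih =>
    have hframe : ∑ v ∈ range TF, (if frameSchedule Dstar TF B l ((N * TF + v : ℕ) : ℤ)
        then (1 : ℝ) else 0) = (TF - Dstar : ℕ) * indVec (B N) l := by
      rw [sum_congr rfl fun v hv => by
        push_cast; rw [frameSchedule_mul_add l N v (mem_range.mp hv)]]
      by_cases hl : l ∈ B N <;> simp [hl, indVec, sum_boole, card_filter_add_lt]
    rw [Nat.succ_mul, sum_range_add, ih, hframe, sum_range_succ, mul_add]

lemma periodic_frameSchedule_natCast (hB : Function.Periodic B N) (hTF : 0 < TF) (l : L) :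
    Function.Periodic (fun u : ℕ => frameSchedule Dstar TF B l u) (N * TF) := by
  intro u
  dsimp only
  rw [frameSchedule_natCast, frameSchedule_natCast, Nat.add_mul_mod_self_right,
    Nat.add_mul_div_right _ _ hTF, hB]

lemma tendsto_rateAvgB_frameSchedule (I : L → Set L) (D : L → L → ℤ)
    (hD : ∀ l, ∀ l' ∈ I l, |D l l'| ≤ (Dstar : ℤ)) (hB : ∀ k, IndepB I (B k))
    (hper : Function.Periodic B N) (hN : 0 < N) (hTF : 0 < TF) (l : L) :
    Tendsto (rateAvgB I D (frameSchedule Dstar TF B) l) atTop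
      (nhds ((TF - Dstar : ℕ) * (∑ k ∈ range N, indVec (B k) l) / (N * TF))) := by
  rw [rateAvgB_eq_of_collisionFreeB (collisionFreeB_frameSchedule I D hD hB hTF)]
  have hg : Function.Periodic (fun u : ℕ => if frameSchedule Dstar TF B l u then (1 : ℝ) else 0)
      (N * TF) := fun u => by simp only [(periodic_frameSchedule_natCast hper hTF l) u]
  have hlim := hg.tendsto_sum_range_div (Nat.mul_pos hN hTF)
  rwa [sum_range_frameSchedule, Nat.cast_mul] at hlim

end FrameSchedule

lemma sum_range_getD {α M : Type*} [AddCommMonoid M] (f : α → M) {d : α} (hd : f d = 0) :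
    ∀ (xs : List α) {N : ℕ}, xs.length ≤ N → ∑ k ∈ range N, f (xs.getD k d) = (xs.map f).sum
  | [], N, _ => by simp [hd]
  | x :: xs, N + 1, h => by
    rw [sum_range_succ', List.map_cons, List.sum_cons, add_comm]
    simp only [List.getD_cons_succ, List.getD_cons_zero]
    rw [sum_range_getD f hd xs (by simpa using h)]

lemma List.getD_mem_or_eq {α : Type*} (xs : List α) (k : ℕ) (d : α) :
    xs.getD k d ∈ xs ∨ xs.getD k d = d := by
  rcases lt_or_ge k xs.length with hk | hk
  · exact .inl (xs.getD_eq_getElem d hk ▸ List.getElem_mem hk)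
  · exact .inr (xs.getD_eq_default d hk)

lemma exists_periodic_sum_indVec_eq {ι L : Type*} {p : Set L → Prop} (hp : p ∅) (t : Finset ι)
    (A : ι → Set L) (hA : ∀ i ∈ t, p (A i)) (n : ι → ℕ) {N : ℕ} (hN : ∑ i ∈ t, n i ≤ N) :
    ∃ B : ℕ → Set L, Function.Periodic B N ∧ (∀ k, p (B k)) ∧
      ∀ l, ∑ k ∈ range N, indVec (B k) l = ∑ i ∈ t, n i * indVec (A i) l := by
  set frames := t.toList.flatMap fun i => List.replicate (n i) (A i)
  have hmem : ∀ X ∈ frames, p X := by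
    simp only [frames, List.mem_flatMap, Finset.mem_toList]
    rintro X ⟨i, hi, hX⟩
    exact List.eq_of_mem_replicate hX ▸ hA i hi
  have hlen : frames.length ≤ N := by
    simpa [frames, List.length_flatMap, Finset.sum_map_toList] using hN
  refine ⟨fun k => frames.getD (k % N) ∅, fun k => by simp, fun k => ?_, fun l => ?_⟩
  · rcases frames.getD_mem_or_eq (k % N) ∅ with h | h
    · exact hmem _ h
    · simpa only [h] using hp
  · have hzero : indVec (∅ : Set L) l = 0 := by simp [indVec]
    have hmod : ∑ k ∈ range N, indVec (frames.getD (k % N) ∅) l =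
        ∑ k ∈ range N, indVec (frames.getD k ∅) l :=
      sum_congr rfl fun k hk => by rw [Nat.mod_eq_of_lt (mem_range.mp hk)]
    rw [hmod, sum_range_getD (indVec · l) hzero frames hlen]
    simp [frames, List.flatMap_def, List.sum_flatten, Finset.sum_map_toList]

lemma sum_floor_mul_le {ι : Type*} {t : Finset ι} {w : ι → ℝ} (hw0 : ∀ i ∈ t, 0 ≤ w i)
    (hw1 : ∑ i ∈ t, w i = 1) (N : ℕ) : ∑ i ∈ t, ⌊w i * N⌋₊ ≤ N := by
  have hsum : ((∑ i ∈ t, ⌊w i * N⌋₊ : ℕ) : ℝ) ≤ N := calc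
    _ = ∑ i ∈ t, (⌊w i * N⌋₊ : ℝ) := by push_cast; rfl
    _ ≤ ∑ i ∈ t, w i * N := sum_le_sum fun i hi => Nat.floor_le (by positivity [hw0 i hi])
    _ = N := by rw [← sum_mul, hw1, one_mul]
  exact_mod_cast hsum

lemma sub_card_le_sum_floor_mul {ι : Type*} (t : Finset ι) (w a : ι → ℝ)
    (ha0 : ∀ i ∈ t, 0 ≤ a i) (ha1 : ∀ i ∈ t, a i ≤ 1) (N : ℕ) :
    N * ∑ i ∈ t, w i * a i - #t ≤ ∑ i ∈ t, (⌊w i * N⌋₊ : ℝ) * a i := calc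
  _ = ∑ i ∈ t, (w i * N * a i - 1) := by
    rw [sum_sub_distrib, mul_sum, sum_const, nsmul_one]
    congr 1
    exact sum_congr rfl fun i _ => by ring
  _ ≤ ∑ i ∈ t, (⌊w i * N⌋₊ : ℝ) * a i := sum_le_sum fun i hi => by
    nlinarith [Nat.lt_floor_add_one (w i * N), ha0 i hi, ha1 i hi]

lemma indVec_nonneg {L : Type*} (A : Set L) (l : L) : 0 ≤ indVec A l := by
  unfold indVec; split_ifs <;> norm_num

lemma indVec_le_one {L : Type*} (A : Set L) (l : L) : indVec A l ≤ 1 := by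
  unfold indVec; split_ifs <;> norm_num

lemma sub_le_sub_mul_div_sq {x s M d m ε : ℝ} (hM : 0 < M) (hd : 0 ≤ d) (hs : s ≤ M)
    (hxs : M * x - m ≤ s) (hε : d + m ≤ ε * M) : x - ε ≤ (M - d) * s / (M * M) := by
  rw [le_div_iff₀ (by positivity)]
  nlinarith [mul_le_mul_of_nonneg_left hs hd, mul_le_mul_of_nonneg_left hxs hM.le,
    mul_le_mul_of_nonneg_left hε hM.le]

theorem stmt_11_general {L : Type*} (I : L → Set L) (D : L → L → ℤ)
    (Dstar : ℕ) (hD : ∀ l, ∀ l' ∈ I l, |D l l'| ≤ (Dstar : ℤ))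
    (R : L → ℝ)
    (hR : R ∈ convexHull ℝ {f : L → ℝ | ∃ A, IndepB I A ∧ f = indVec A})
    (ε : ℝ) (hε : 0 < ε) :
    ∃ (TF : ℕ) (S : L → ℤ → Bool), 2 * Dstar + 1 ≤ TF ∧
      Framed Dstar TF S ∧ CollisionFreeB I D S ∧
      ∃ r : L → ℝ, (∀ l, Tendsto (rateAvgB I D S l) atTop (nhds (r l))) ∧
        ∀ l, R l - ε ≤ r l := by
  obtain ⟨ι, t, w, z, hw0, hw1, hz, rfl⟩ := (_root_.convexHull_eq _).subset hR
  choose! A hAindep hzA using hz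
  obtain ⟨M₀, hM₀⟩ := exists_nat_gt ((Dstar + #t) / ε)
  set M := M₀ + 2 * Dstar + 1
  have hM : (0 : ℝ) < M := by positivity
  have hslack : (Dstar + #t : ℝ) ≤ ε * M := by
    rw [div_lt_iff₀ hε] at hM₀
    have : (M₀ : ℝ) ≤ M := by exact_mod_cast (by omega : M₀ ≤ M)
    nlinarith
  obtain ⟨B, hper, hBindep, hBsum⟩ := exists_periodic_sum_indVec_eq (p := IndepB I)
    (fun _ h => h.elim) t A hAindep (fun i => ⌊w i * M⌋₊) (sum_floor_mul_le hw0 hw1 M)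
  refine ⟨M, frameSchedule Dstar M B, by omega, framed_frameSchedule,
    collisionFreeB_frameSchedule I D hD hBindep (by omega), _,
    tendsto_rateAvgB_frameSchedule I D hD hBindep hper (by omega) (by omega), fun l => ?_⟩
  have hRl : t.centerMass w z l = ∑ i ∈ t, w i * indVec (A i) l := by
    rw [centerMass_eq_of_sum_1 _ _ hw1, Finset.sum_apply]
    exact sum_congr rfl fun i hi => by rw [hzA i hi, Pi.smul_apply, smul_eq_mul]
  have hs_le : ∑ k ∈ range M, indVec (B k) l ≤ M := by
    simpa using sum_le_sum fun k (_ : k ∈ range M) => indVec_le_one (B k) l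
  have hs_ge : M * t.centerMass w z l - #t ≤ ∑ k ∈ range M, indVec (B k) l := by
    rw [hBsum, hRl]
    exact sub_card_le_sum_floor_mul t w _ (fun i _ => indVec_nonneg _ _)
      (fun i _ => indVec_le_one _ _) M
  rw [Nat.cast_sub (by omega)]
  exact sub_le_sub_mul_div_sq hM (Nat.cast_nonneg _) hs_le hs_ge hslack

/-- every rate vector in the convex hull of indicator vectors of
independent sets of the conflict graph is achievable by collision-free framed
schedules. -/
theorem stmt_11 {L : Type*} [Fintype L] (I : L → Set L) (D : L → L → ℤ)
    (Dstar : ℕ) (hD : ∀ l, ∀ l' ∈ I l, |D l l'| ≤ (Dstar : ℤ))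
    (R : L → ℝ)
    (hR : R ∈ convexHull ℝ {f : L → ℝ | ∃ A, IndepB I A ∧ f = indVec A})
    (ε : ℝ) (hε : 0 < ε) :
    ∃ (TF : ℕ) (S : L → ℤ → Bool), 2 * Dstar + 1 ≤ TF ∧
      Framed Dstar TF S ∧ CollisionFreeB I D S ∧
      ∃ r : L → ℝ, (∀ l, Tendsto (rateAvgB I D S l) atTop (nhds (r l))) ∧
        ∀ l, R l - ε ≤ r l :=
  stmt_11_general I D Dstar hD R hR ε hε
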